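/- arXiv:1709.06367 — 2 statements merged into one kernel-verified Lean document; each statement's English description precedes it below -/
import Mathlib

section
/- For every real s ≥ 1, every instance of the favorite-machine scheduling game on two machines with parameter s, and every allocation x that is a pure Nash equilibrium, the makespan of x is at most (s³ + s² + s + 1)/(s² + s + 1) times the optimal makespan. -/
open Finset

/-- Processing time of job `j` on machine `i` in the favorite-machine model:
`q j` on the favorite machine `f j` and `s * q j` on the other machine. -/
noncomputable def ptime (s : ℝ) {n : ℕ} (q : Fin n → ℝ) (f : Fin n → Fin 2)
    (i : Fin 2) (j : Fin n) : ℝ :=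
  if f j = i then q j else s * q j

/-- Load of machine `i` under allocation `x`. -/
noncomputable def load (s : ℝ) {n : ℕ} (q : Fin n → ℝ) (f : Fin n → Fin 2)
    (x : Fin n → Fin 2) (i : Fin 2) : ℝ :=
  ∑ j ∈ Finset.univ.filter (fun j => x j = i), ptime s q f i j

/-- Makespan (maximum load) of allocation `x`. -/
noncomputable def makespan (s : ℝ) {n : ℕ} (q : Fin n → ℝ) (f : Fin n → Fin 2)
    (x : Fin n → Fin 2) : ℝ :=
  max (load s q f x 0) (load s q f x 1)

/-- The optimal (minimum) makespan over all allocations. -/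
noncomputable def optMakespan (s : ℝ) {n : ℕ} (q : Fin n → ℝ) (f : Fin n → Fin 2) : ℝ :=
  ⨅ y : Fin n → Fin 2, makespan s q f y

/-- Pure Nash equilibrium: no job can move to the other machine and find there
a load smaller than its current cost. -/
def IsNE (s : ℝ) {n : ℕ} (q : Fin n → ℝ) (f : Fin n → Fin 2)
    (x : Fin n → Fin 2) : Prop :=
  ∀ j : Fin n, ∀ i : Fin 2, i ≠ x j →
    load s q f x (x j) ≤ load s q f (Function.update x j i) i

/-- Strong equilibrium: for every deviation `y` differing from `x` on a nonempty
set of jobs, some deviating job does not improve its cost. -/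
def IsSE (s : ℝ) {n : ℕ} (q : Fin n → ℝ) (f : Fin n → Fin 2)
    (x : Fin n → Fin 2) : Prop :=
  ∀ y : Fin n → Fin 2, (∃ j, y j ≠ x j) →
    ∃ j, y j ≠ x j ∧ load s q f x (x j) ≤ load s q f y (y j)

/-!
Fix an equilibrium `x`, any allocation `y`, and a machine `a` with other machine `b`. If some job
of `a` moves to `b` under `y` (say `j₀`) and another stays on `a` (say `j₁`), the equilibrium
conditions of `j₀` and `j₁` give `ℓ_a(x) ≤ ℓ_b(x) + p_b(j₀)` and `ℓ_a(x) ≤ ℓ_b(x) + s·p_a(j₁)`;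
together with `ℓ_a(x) ≤ s·(moved part) + (staying part)`, the weights `1`, `s²` and `s` combine
them into `(s² + s + 1)·ℓ_a(x) ≤ (s³ + s² + s + 1)·C(y)`. If no job moves, or none stays,
already `ℓ_a(x) ≤ s·C(y)`.
-/

section

variable {s : ℝ} {n : ℕ} {q : Fin n → ℝ} {f : Fin n → Fin 2}

lemma ptime_nonneg (hs : 0 ≤ s) {j : Fin n} (hq : 0 ≤ q j) (i : Fin 2) :
    0 ≤ ptime s q f i j := by
  unfold ptime
  split_ifs <;> positivity

lemma ptime_le_mul_ptime (hs : 1 ≤ s) {j : Fin n} (hq : 0 ≤ q j) (i i' : Fin 2) :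
    ptime s q f i j ≤ s * ptime s q f i' j := by
  have hsq : q j ≤ s * q j := le_mul_of_one_le_left hq hs
  have hssq : s * q j ≤ s * (s * q j) := le_mul_of_one_le_left (by positivity) hs
  unfold ptime
  split_ifs <;> linarith

lemma sum_ptime_le_mul_sum_ptime (hs : 1 ≤ s) (hq : ∀ j, 0 ≤ q j) (S : Finset (Fin n))
    (i i' : Fin 2) : ∑ j ∈ S, ptime s q f i j ≤ s * ∑ j ∈ S, ptime s q f i' j := by
  rw [mul_sum]
  exact sum_le_sum fun j _ => ptime_le_mul_ptime hs (hq j) i i'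

lemma load_le_makespan (x : Fin n → Fin 2) (i : Fin 2) : load s q f x i ≤ makespan s q f x := by
  fin_cases i
  exacts [le_max_left _ _, le_max_right _ _]

lemma load_update_of_ne {x : Fin n → Fin 2} {j : Fin n} {i : Fin 2} (hj : x j ≠ i) :
    load s q f (Function.update x j i) i = load s q f x i + ptime s q f i j := by
  have hjobs : univ.filter (fun k => Function.update x j i k = i)
      = insert j (univ.filter fun k => x k = i) := by
    ext k
    by_cases hk : k = j <;> simp [hk]
  rw [load, load, hjobs, sum_insert (by simp [hj]), add_comm]

lemma IsNE.load_le_load_add_ptime {x : Fin n → Fin 2} (hx : IsNE s q f x) {j : Fin n}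
    {a b : Fin 2} (hj : x j = a) (hab : a ≠ b) :
    load s q f x a ≤ load s q f x b + ptime s q f b j := by
  have h := hx j b (hj ▸ hab.symm)
  rwa [hj, load_update_of_ne (hj ▸ hab)] at h

lemma load_eq_sum_add_sum {a b : Fin 2} (hab : a ≠ b) (x y : Fin n → Fin 2) (i : Fin 2) :
    load s q f x i = ∑ j ∈ univ.filter (fun j => x j = i ∧ y j = a), ptime s q f i j
      + ∑ j ∈ univ.filter (fun j => x j = i ∧ y j = b), ptime s q f i j := by
  rw [load, ← sum_filter_add_sum_filter_not _ (fun j => y j = a), filter_filter, filter_filter]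
  congr 2
  ext j
  simp only [mem_filter, mem_univ, true_and]
  omega

lemma poa_ineq_of_bounds (hs : 1 ≤ s) {L K A B C E M : ℝ} (hLC : L ≤ s * C + B) (hLK : L ≤ K + C)
    (hLB : L ≤ K + s * B) (hK : K ≤ s * A + E) (hBA : B + A ≤ M) (hCE : C + E ≤ M) :
    (s ^ 2 + s + 1) * L ≤ (s ^ 3 + s ^ 2 + s + 1) * M := by
  linear_combination s * hLC + hLK + s ^ 2 * hLB + (s ^ 2 + 1) * hK + (s ^ 3 + s) * hBA
    + (s ^ 2 + 1) * hCE

lemma poa_ineq_of_le_mul (hs : 1 ≤ s) {L M : ℝ} (hM : 0 ≤ M) (hL : L ≤ s * M) :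
    (s ^ 2 + s + 1) * L ≤ (s ^ 3 + s ^ 2 + s + 1) * M := by
  linear_combination (s ^ 2 + s + 1) * hL + hM

lemma IsNE.mul_load_le_mul_makespan (hs : 1 ≤ s) (hq : ∀ j, 0 ≤ q j) {x : Fin n → Fin 2}
    (hx : IsNE s q f x) {a b : Fin 2} (hab : a ≠ b) (y : Fin n → Fin 2) :
    (s ^ 2 + s + 1) * load s q f x a ≤ (s ^ 3 + s ^ 2 + s + 1) * makespan s q f y := by
  have hs0 : 0 ≤ s := by linarith
  have hswap (i k : Fin 2) : univ.filter (fun j => y j = i ∧ x j = k)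
      = univ.filter (fun j => x j = k ∧ y j = i) :=
    filter_congr fun _ _ => and_comm
  have hxa := load_eq_sum_add_sum (s := s) (q := q) (f := f) hab x y a
  have hxb := load_eq_sum_add_sum (s := s) (q := q) (f := f) hab x y b
  have hya := load_le_makespan (s := s) (q := q) (f := f) y a
  have hyb := load_le_makespan (s := s) (q := q) (f := f) y b
  rw [load_eq_sum_add_sum hab y x, hswap, hswap] at hya hyb
  set D := univ.filter (fun j => x j = a ∧ y j = b)
  set W := univ.filter (fun j => x j = a ∧ y j = a)
  set U := univ.filter (fun j => x j = b ∧ y j = a)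
  set E := univ.filter (fun j => x j = b ∧ y j = b)
  have hDa := sum_ptime_le_mul_sum_ptime (f := f) hs hq D a b
  have hUb := sum_ptime_le_mul_sum_ptime (f := f) hs hq U b a
  have hnonneg (S : Finset (Fin n)) (i : Fin 2) : 0 ≤ ∑ j ∈ S, ptime s q f i j :=
    sum_nonneg fun j _ => ptime_nonneg hs0 (hq j) i
  have hM0 := (hnonneg W a).trans (le_add_of_nonneg_right (hnonneg U a)) |>.trans hya
  obtain hD | ⟨j₀, hj₀⟩ := D.eq_empty_or_nonempty
  · refine poa_ineq_of_le_mul hs hM0 ?_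
    rw [hxa, hD, sum_empty, add_zero]
    nlinarith [hnonneg U a]
  obtain hW | ⟨j₁, hj₁⟩ := W.eq_empty_or_nonempty
  · refine poa_ineq_of_le_mul hs hM0 ?_
    rw [hxa, hW, sum_empty, zero_add]
    nlinarith [hnonneg E b]
  obtain ⟨hxj₀, hyj₀⟩ := (mem_filter.mp hj₀).2
  obtain ⟨hxj₁, hyj₁⟩ := (mem_filter.mp hj₁).2
  refine poa_ineq_of_bounds hs (K := load s q f x b) (by rw [hxa]; linarith) ?_ ?_
    (by rw [hxb]; linarith) hya hyb
  · calc load s q f x a ≤ load s q f x b + ptime s q f b j₀ := hx.load_le_load_add_ptime hxj₀ hab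
      _ ≤ _ := by gcongr; exact single_le_sum (fun j _ => ptime_nonneg hs0 (hq j) b) hj₀
  · calc load s q f x a ≤ load s q f x b + ptime s q f b j₁ := hx.load_le_load_add_ptime hxj₁ hab
      _ ≤ load s q f x b + s * ptime s q f a j₁ := by
        gcongr; exact ptime_le_mul_ptime hs (hq j₁) b a
      _ ≤ _ := by gcongr; exact single_le_sum (fun j _ => ptime_nonneg hs0 (hq j) a) hj₁

lemma IsNE.load_le_mul_makespan (hs : 1 ≤ s) (hq : ∀ j, 0 ≤ q j) {x : Fin n → Fin 2}
    (hx : IsNE s q f x) {a b : Fin 2} (hab : a ≠ b) (y : Fin n → Fin 2) :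
    load s q f x a ≤ (s ^ 3 + s ^ 2 + s + 1) / (s ^ 2 + s + 1) * makespan s q f y := by
  rw [div_mul_eq_mul_div, le_div_iff₀ (by nlinarith), mul_comm]
  exact hx.mul_load_le_mul_makespan hs hq hab y

end

theorem poa_upper_bound
    (s : ℝ) (hs : 1 ≤ s)
    {n : ℕ} (q : Fin n → ℝ) (hq : ∀ j, 0 < q j)
    (f : Fin n → Fin 2) (x : Fin n → Fin 2) (hx : IsNE s q f x) :
    makespan s q f x ≤ ((s^3 + s^2 + s + 1)/(s^2 + s + 1)) * optMakespan s q f := by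
  have hq' : ∀ j, 0 ≤ q j := fun j => (hq j).le
  have hratio : 0 ≤ (s ^ 3 + s ^ 2 + s + 1) / (s ^ 2 + s + 1) :=
    div_nonneg (by nlinarith) (by nlinarith)
  rw [optMakespan, Real.mul_iInf_of_nonneg hratio]
  exact le_ciInf fun y => max_le (hx.load_le_mul_makespan hs hq' zero_ne_one y)
    (hx.load_le_mul_makespan hs hq' one_ne_zero y)
end

section
/- Fix a real s ≥ 1 and consider the instance of the favorite-machine scheduling game on two machines with parameter s consisting of two jobs, both of size 1, where job 1 has favorite machine 1 and job 2 has favorite machine 2. Then the allocation assigning job 1 to machine 2 and job 2 to machine 1 is a pure Nash equilibrium with makespan s, while the optimal makespan is 1. Consequently, the price of anarchy at parameter s is at least s. -/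
open Finset

/-! In the crossed allocation each job sits alone on its unfavorite machine with cost `s`;
moving would put it next to the other job, raising that machine's load to `s + 1`. No allocation
does better than `1`, since with `s ≥ 1` every job costs at least its size, and the favorite
allocation attains `1`. -/

section FavoriteMachine

variable {s : ℝ} {n : ℕ} {q : Fin n → ℝ} {f : Fin n → Fin 2}

lemma le_ptime (hs : 1 ≤ s) {j : Fin n} (hq : 0 ≤ q j) (i : Fin 2) :
    q j ≤ ptime s q f i j := by
  unfold ptime
  split_ifs <;> nlinarith

lemma ptime_le_load (hs : 0 ≤ s) (hq : ∀ j, 0 ≤ q j) (x : Fin n → Fin 2) (j : Fin n) :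
    ptime s q f (x j) j ≤ load s q f x (x j) :=
  Finset.single_le_sum (f := ptime s q f (x j)) (fun k _ => ptime_nonneg hs (hq k) _)
    (Finset.mem_filter.2 ⟨Finset.mem_univ j, rfl⟩)

lemma le_makespan (hs : 1 ≤ s) (hq : ∀ j, 0 ≤ q j) (x : Fin n → Fin 2) (j : Fin n) :
    q j ≤ makespan s q f x :=
  calc q j ≤ ptime s q f (x j) j := le_ptime hs (hq j) _
    _ ≤ load s q f x (x j) := ptime_le_load (by linarith) hq x j
    _ ≤ makespan s q f x := load_le_makespan x _

lemma optMakespan_le_makespan (x : Fin n → Fin 2) : optMakespan s q f ≤ makespan s q f x :=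
  ciInf_le (Set.finite_range _).bddBelow x

lemma le_optMakespan {m : ℝ} (h : ∀ x, m ≤ makespan s q f x) : m ≤ optMakespan s q f :=
  le_ciInf h

lemma isNE_iff {x : Fin n → Fin 2} :
    IsNE s q f x ↔ ∀ j, ∀ i ≠ x j, load s q f x (x j) ≤ load s q f x i + ptime s q f i j := by
  refine forall_congr' fun j => forall₂_congr fun i hi => ?_
  rw [load_update_of_ne hi.symm]

end FavoriteMachine

lemma load_fin_two (s : ℝ) (q : Fin 2 → ℝ) (f x : Fin 2 → Fin 2) (i : Fin 2) :
    load s q f x i = (if x 0 = i then ptime s q f i 0 else 0) +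
      (if x 1 = i then ptime s q f i 1 else 0) := by
  rw [load, Finset.sum_filter, Fin.sum_univ_two]

theorem poa_lower_bound_s
    (s : ℝ) (hs : 1 ≤ s)
    (q : Fin 2 → ℝ) (hq : q = ![1, 1])
    (f : Fin 2 → Fin 2) (hf : f = ![0, 1])
    (x : Fin 2 → Fin 2) (hx : x = ![1, 0]) :
    IsNE s q f x ∧
      makespan s q f x = s ∧
      optMakespan s q f = 1 ∧
      (s) * optMakespan s q f ≤ makespan s q f x := by
  subst hq hf hx
  have hcrossed : makespan s ![1, 1] ![0, 1] ![1, 0] = s := by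
    simp [makespan, load_fin_two, ptime]
  have hfavorite : makespan s ![1, 1] ![0, 1] ![0, 1] = 1 := by
    simp [makespan, load_fin_two, ptime]
  have hsize : ∀ j, (0 : ℝ) ≤ ![1, 1] j := by simp [Fin.forall_fin_two]
  have hopt : optMakespan s ![1, 1] ![0, 1] = 1 :=
    le_antisymm ((optMakespan_le_makespan ![0, 1]).trans_eq hfavorite)
      (le_optMakespan fun y => by simpa using le_makespan hs hsize y 0)
  refine ⟨?_, hcrossed, hopt, by rw [hopt, hcrossed, mul_one]⟩
  rw [isNE_iff]
  intro j i hi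
  fin_cases j <;> fin_cases i <;> simp_all [load_fin_two, ptime]
end
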